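/- arXiv:2307.16234 — 5 statements merged into one kernel-verified Lean document; each statement's English description precedes it below -/
import Mathlib

section
/- If x ∈ 𝓞_K satisfies |N(x)| = p for a prime number p with p ≠ λ, then p ≡ 1 (mod λ), i.e., λ divides p − 1. -/
/-!
The principal ideal `P = (x)` has absolute norm `p`, so it is a prime of residue degree one
above `p`. Since `p ∤ λ`, the residue degree of any prime of `ℚ(ζ_λ)` above `p` is the order
of `p` in `(ℤ/λℤ)ˣ`; hence `p ≡ 1 (mod λ)`.
-/

open NumberField

noncomputable instance (n : ℕ+) : NumberField (CyclotomicField n ℚ) :=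
  @IsCyclotomicExtension.numberField {(n : ℕ)} ℚ (CyclotomicField n ℚ) _ _
    (CyclotomicField.algebra _ _) _ _ _

open Ideal

namespace Ideal

variable {R : Type*} [CommRing R] [IsDedekindDomain R] [Module.Free ℤ R]
  {P : Ideal R} {p : ℕ}

theorem isPrime_of_absNorm_eq_prime (hp : p.Prime) (hP : absNorm P = p) : P.IsPrime :=
  isPrime_of_irreducible_absNorm (hP ▸ hp.prime.irreducible)

theorem liesOver_span_of_absNorm_eq_prime (hp : p.Prime) (hP : absNorm P = p) :
    P.LiesOver (span {(p : ℤ)}) :=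
  (liesOver_iff _ _).mpr (hP ▸ span_singleton_absNorm (hP ▸ hp))

theorem inertiaDeg_eq_one_of_absNorm_eq_prime [Module.Finite ℤ R] (hp : p.Prime)
    (hP : absNorm P = p) :
    P.inertiaDeg ℤ = 1 := by
  have := isPrime_of_absNorm_eq_prime hp hP
  have := liesOver_span_of_absNorm_eq_prime hp hP
  have h := pow_inertiaDeg p P
  rw [hP] at h
  exact (Nat.pow_eq_self_iff hp.one_lt).mp h

end Ideal

theorem IsCyclotomicExtension.Rat.dvd_sub_one_of_absNorm_eq_prime {m : ℕ} [NeZero m]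
    {K : Type*} [Field K] [NumberField K] [IsCyclotomicExtension {m} ℚ K]
    {p : ℕ} (hp : p.Prime) (hpm : ¬ p ∣ m) {P : Ideal (𝓞 K)} (hP : absNorm P = p) :
    m ∣ p - 1 := by
  have : Fact p.Prime := ⟨hp⟩
  have := isPrime_of_absNorm_eq_prime hp hP
  have := liesOver_span_of_absNorm_eq_prime hp hP
  have horder : orderOf (p : ZMod m) = 1 := by
    rw [← inertiaDeg_eq_of_not_dvd p K P hpm, inertiaDeg_eq_one_of_absNorm_eq_prime hp hP]
  have hp_eq_one : ((1 : ℕ) : ZMod m) = p := by simpa using (orderOf_eq_one_iff.mp horder).symm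
  exact (Nat.modEq_iff_dvd' hp.one_le).mp ((ZMod.natCast_eq_natCast_iff _ _ _).mp hp_eq_one)

/-- If a cyclotomic integer in the `λ`-th cyclotomic field has norm of absolute value a
prime `p ≠ λ`, then `λ` divides `p - 1`, i.e. `p ≡ 1 (mod λ)`. -/
theorem prime_norm_cyclotomic_congr_one (l : ℕ+) (hl : (l : ℕ).Prime)
    (p : ℕ) (hp : p.Prime) (hpl : p ≠ (l : ℕ))
    (x : 𝓞 (CyclotomicField l ℚ))
    (hx : (Algebra.norm ℤ x).natAbs = p) :
    (l : ℕ) ∣ p - 1 := by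
  have : IsCyclotomicExtension {(l : ℕ)} ℚ (CyclotomicField l ℚ) :=
    CyclotomicField.isCyclotomicExtension (l : ℕ) ℚ
  have hp_not_dvd : ¬ p ∣ l := fun h ↦ hpl ((Nat.prime_dvd_prime_iff_eq hp hl).mp h)
  exact IsCyclotomicExtension.Rat.dvd_sub_one_of_absNorm_eq_prime hp hp_not_dvd
    (P := span {x}) (by rw [absNorm_span_singleton, hx])
end

section
/- If x ∈ 𝓞_K satisfies |N(x)| = p for a prime number p, then there exists an integer ξ ∈ ℤ such that x divides ζ − ξ in 𝓞_K. -/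
open NumberField

/-! The quotient `𝓞_K ⧸ (x)` has `|N(x)| = p` elements, so it is `ℤ/p`, and every residue class,
in particular that of `ζ`, contains a rational integer. -/

theorem Int.cast_surjective_of_prime_natCard {R : Type*} [Ring R] (h : (Nat.card R).Prime) :
    Function.Surjective (Int.cast : ℤ → R) := by
  have : Finite R := Nat.finite_of_card_ne_zero h.ne_zero
  have := Fintype.ofFinite R
  let e := ZMod.ringEquivOfPrime R h Nat.card_eq_fintype_card.symm
  intro y
  obtain ⟨k, hk⟩ := ZMod.intCast_surjective (e.symm y)
  exact ⟨k, by rw [← map_intCast e, hk, e.apply_symm_apply]⟩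

theorem Ideal.natCard_quotient_span_singleton {S : Type*} [CommRing S] [IsDedekindDomain S]
    [Module.Free ℤ S] [Module.Finite ℤ S] (x : S) :
    Nat.card (S ⧸ Ideal.span {x}) = (Algebra.norm ℤ x).natAbs := by
  rw [← Ideal.absNorm_span_singleton, Ideal.absNorm_apply, Submodule.cardQuot_apply]

theorem exists_int_dvd_sub_of_prime_natAbs_norm {S : Type*} [CommRing S] [IsDedekindDomain S]
    [Module.Free ℤ S] [Module.Finite ℤ S] {x : S} (hx : (Algebra.norm ℤ x).natAbs.Prime)
    (y : S) : ∃ ξ : ℤ, x ∣ y - ξ := by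
  rw [← Ideal.natCard_quotient_span_singleton] at hx
  obtain ⟨ξ, hξ⟩ := Int.cast_surjective_of_prime_natCard hx (Ideal.Quotient.mk _ y)
  refine ⟨ξ, Ideal.mem_span_singleton.1 (Ideal.Quotient.eq.1 ?_)⟩
  rw [map_intCast, hξ]

theorem exists_int_dvd_zeta_sub_general (l : ℕ+)
    (ζ : 𝓞 (CyclotomicField l ℚ))
    (p : ℕ) (hp : p.Prime)
    (x : 𝓞 (CyclotomicField l ℚ))
    (hx : (Algebra.norm ℤ x).natAbs = p) :
    ∃ ξ : ℤ, x ∣ ζ - (ξ : 𝓞 (CyclotomicField l ℚ)) :=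
  exists_int_dvd_sub_of_prime_natAbs_norm (hx ▸ hp) ζ

/-- If a cyclotomic integer `x` has norm of prime absolute value `p`, then there is an
ordinary integer `ξ` such that `x` divides `ζ - ξ` in the ring of integers. -/
theorem exists_int_dvd_zeta_sub (l : ℕ+) (hl : (l : ℕ).Prime)
    (ζ : 𝓞 (CyclotomicField l ℚ)) (hζ : IsPrimitiveRoot ζ l)
    (p : ℕ) (hp : p.Prime)
    (x : 𝓞 (CyclotomicField l ℚ))
    (hx : (Algebra.norm ℤ x).natAbs = p) :
    ∃ ξ : ℤ, x ∣ ζ - (ξ : 𝓞 (CyclotomicField l ℚ)) :=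
  exists_int_dvd_zeta_sub_general l ζ p hp x hx
end

section
/- For any two units c, d ∈ (ℤ/λℤ)ˣ, the product of Gauss periods η_c · η_d lies in the ℤ-submodule of K spanned by 1 together with all the periods η_{c'}, c' ∈ (ℤ/λℤ)ˣ. In particular, the ℤ-span of 1 and the periods is a subring of K. -/
open scoped BigOperators

/-- The Gauss period `η_c = ∑_{h ∈ H} ζ^(c·h)` attached to a unit `c` modulo `λ`. -/
noncomputable def gaussPeriod (l : ℕ+) (ζ : CyclotomicField l ℚ)
    (H : Subgroup (ZMod (l : ℕ))ˣ) [Fintype H] (c : (ZMod (l : ℕ))ˣ) :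
    CyclotomicField l ℚ :=
  ∑ h : H, ζ ^ (((c * (h : (ZMod (l : ℕ))ˣ) : (ZMod (l : ℕ))ˣ) : ZMod (l : ℕ)).val)

/-!
Writing `ψ(a) = ζ^a` for the additive character of `ℤ/λ` given by `ζ`, the substitution
`k ↦ m h` in the double sum gives `η_c η_d = ∑_{m ∈ H} ∑_{h ∈ H} ψ((c + d m) h)`.
Each inner sum is `|H|` when `c + d m = 0` and the period `η_{c + d m}` otherwise, because
`ℤ/λ` is a field. So the span of `1` and the periods is closed under multiplication.
-/

namespace Submodule

variable {R A : Type*} [CommSemiring R] [Semiring A] [Algebra R A]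

theorem mul_mem_span_of_mul_mem {s : Set A} (hs : ∀ x ∈ s, ∀ y ∈ s, x * y ∈ span R s)
    {x y : A} (hx : x ∈ span R s) (hy : y ∈ span R s) : x * y ∈ span R s := by
  have hle : span R s * span R s ≤ span R s := by
    rw [span_mul_span, span_le]
    rintro _ ⟨x, hx, y, hy, rfl⟩
    exact hs x hx y hy
  exact hle (mul_mem_mul hx hy)

theorem mul_mem_span_insert_one {t : Set A}
    (ht : ∀ x ∈ t, ∀ y ∈ t, x * y ∈ span R (insert 1 t)) {x y : A}
    (hx : x ∈ span R (insert 1 t)) (hy : y ∈ span R (insert 1 t)) :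
    x * y ∈ span R (insert 1 t) := by
  refine mul_mem_span_of_mul_mem ?_ hx hy
  rintro x (rfl | hx) y (rfl | hy)
  · simpa using subset_span (Set.mem_insert 1 t)
  · simpa using subset_span (Set.mem_insert_of_mem 1 hy)
  · simpa using subset_span (Set.mem_insert_of_mem 1 hx)
  · exact ht x hx y hy

end Submodule

section GaussPeriod

variable {l : ℕ+} {ζ : CyclotomicField l ℚ} {H : Subgroup (ZMod (l : ℕ))ˣ} [Fintype H]

theorem gaussPeriod_eq_sum_zmodChar (hζ : ζ ^ (l : ℕ) = 1) (c : (ZMod (l : ℕ))ˣ) :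
    gaussPeriod l ζ H c = ∑ h : H, AddChar.zmodChar (l : ℕ) hζ (c * (h : (ZMod (l : ℕ))ˣ)) :=
  rfl

theorem gaussPeriod_mul_gaussPeriod (hζ : ζ ^ (l : ℕ) = 1) (c d : (ZMod (l : ℕ))ˣ) :
    gaussPeriod l ζ H c * gaussPeriod l ζ H d =
      ∑ m : H, ∑ h : H, AddChar.zmodChar (l : ℕ) hζ
        ((c + d * (m : (ZMod (l : ℕ))ˣ)) * (h : (ZMod (l : ℕ))ˣ)) := by
  rw [gaussPeriod_eq_sum_zmodChar hζ, gaussPeriod_eq_sum_zmodChar hζ, Finset.sum_mul_sum]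
  conv_rhs => rw [Finset.sum_comm]
  refine Finset.sum_congr rfl fun h _ ↦ ?_
  rw [← Equiv.sum_comp (Equiv.mulRight h)]
  refine Finset.sum_congr rfl fun m _ ↦ ?_
  rw [← AddChar.map_add_eq_mul]
  congr 1
  push_cast [Equiv.coe_mulRight]
  ring

theorem sum_zmodChar_mul_mem_span (hl : (l : ℕ).Prime) (hζ : ζ ^ (l : ℕ) = 1)
    (u : ZMod (l : ℕ)) :
    ∑ h : H, AddChar.zmodChar (l : ℕ) hζ (u * (h : (ZMod (l : ℕ))ˣ)) ∈
      Submodule.span ℤ (insert 1 (Set.range (gaussPeriod l ζ H))) := by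
  have : Fact (l : ℕ).Prime := ⟨hl⟩
  rcases eq_or_ne u 0 with rfl | hu
  · simpa using nsmul_mem (Submodule.subset_span (R := ℤ)
      (Set.mem_insert (1 : CyclotomicField l ℚ) (Set.range (gaussPeriod l ζ H)))) (Fintype.card H)
  · rw [← Units.val_mk0 hu, ← gaussPeriod_eq_sum_zmodChar hζ]
    exact Submodule.subset_span (Set.mem_insert_of_mem 1 (Set.mem_range_self _))

end GaussPeriod

theorem gaussPeriod_mul_mem_span_general (l : ℕ+) (hl : (l : ℕ).Prime)
    (ζ : CyclotomicField l ℚ) (hζ : IsPrimitiveRoot ζ l)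
    (H : Subgroup (ZMod (l : ℕ))ˣ) [Fintype H] :
    (∀ c d : (ZMod (l : ℕ))ˣ,
        gaussPeriod l ζ H c * gaussPeriod l ζ H d ∈
          Submodule.span ℤ
            (insert (1 : CyclotomicField l ℚ) (Set.range (gaussPeriod l ζ H)))) ∧
      ∃ S : Subring (CyclotomicField l ℚ),
        (S : Set (CyclotomicField l ℚ)) =
          (Submodule.span ℤ
            (insert (1 : CyclotomicField l ℚ) (Set.range (gaussPeriod l ζ H))) :
              Submodule ℤ (CyclotomicField l ℚ)) := by
  have hmul (c d : (ZMod (l : ℕ))ˣ) : gaussPeriod l ζ H c * gaussPeriod l ζ H d ∈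
      Submodule.span ℤ (insert 1 (Set.range (gaussPeriod l ζ H))) := by
    rw [gaussPeriod_mul_gaussPeriod hζ.pow_eq_one c d]
    exact Submodule.sum_mem _ fun m _ ↦ sum_zmodChar_mul_mem_span hl hζ.pow_eq_one _
  refine ⟨hmul, ?_⟩
  have hmul_range : ∀ x ∈ Set.range (gaussPeriod l ζ H), ∀ y ∈ Set.range (gaussPeriod l ζ H),
      x * y ∈ Submodule.span ℤ (insert 1 (Set.range (gaussPeriod l ζ H))) :=
    Set.forall_mem_range.2 fun c ↦ Set.forall_mem_range.2 (hmul c)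
  exact ⟨(Submodule.toSubalgebra _ (Submodule.subset_span (Set.mem_insert 1 _))
    fun _ _ ↦ Submodule.mul_mem_span_insert_one hmul_range).toSubring, rfl⟩

/-- The product of two Gauss periods lies in the `ℤ`-span of `1` and the periods; in
particular this span is a subring of the cyclotomic field. -/
theorem gaussPeriod_mul_mem_span (l : ℕ+) (hl : (l : ℕ).Prime)
    (ζ : CyclotomicField l ℚ) (hζ : IsPrimitiveRoot ζ l)
    (H : Subgroup (ZMod (l : ℕ))ˣ) [Fintype H] (f : ℕ) (hf : Fintype.card H = f) :
    (∀ c d : (ZMod (l : ℕ))ˣ,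
        gaussPeriod l ζ H c * gaussPeriod l ζ H d ∈
          Submodule.span ℤ
            (insert (1 : CyclotomicField l ℚ) (Set.range (gaussPeriod l ζ H)))) ∧
      ∃ S : Subring (CyclotomicField l ℚ),
        (S : Set (CyclotomicField l ℚ)) =
          (Submodule.span ℤ
            (insert (1 : CyclotomicField l ℚ) (Set.range (gaussPeriod l ζ H))) :
              Submodule ℤ (CyclotomicField l ℚ)) :=
  gaussPeriod_mul_mem_span_general l hl ζ hζ H
end

section
/- Let η = η₁ = Σ_{h ∈ H} ζ^h be the Gauss period of the identity coset. Then every Gauss period η_c, for c ∈ (ℤ/λℤ)ˣ, lies in the intermediate field ℚ(η) generated over ℚ by η inside K. -/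
open scoped BigOperators

/-! An automorphism `σ` of `ℚ(ζ)` acts by `ζ ↦ ζ^a` and hence sends `η_c` to `η_{ac}`. As
`ζ, ζ², …, ζ^(λ-1)` are linearly independent over `ℚ`, a period `η_c` determines its coset `cH`,
so `σ` fixes `η = η₁` only if `a ∈ H`, and then `σ` fixes every `η_c`. By Galois theory every
`η_c` lies in `ℚ(η)`. -/

theorem LinearIndependent.injective_finsetSum {ι R M : Type*} [Ring R] [Nontrivial R]
    [AddCommGroup M] [Module R M] [DecidableEq ι] {v : ι → M} (hv : LinearIndependent R v) :
    Function.Injective fun s : Finset ι => ∑ i ∈ s, v i := by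
  intro s t hst
  let g : ι → R := fun i => (if i ∈ s then 1 else 0) - if i ∈ t then 1 else 0
  have hg : ∑ i ∈ s ∪ t, g i • v i = 0 := by
    simp only [g, sub_smul, ite_smul, one_smul, zero_smul, Finset.sum_sub_distrib,
      Finset.sum_ite_mem, Finset.union_inter_cancel_left, Finset.union_inter_cancel_right]
    exact sub_eq_zero.2 hst
  ext i
  by_cases hi : i ∈ s ∪ t
  · have := linearIndependent_iff'.1 hv _ g hg i hi
    by_cases hs : i ∈ s <;> by_cases ht : i ∈ t <;> simp_all [g]
  · simp_all

theorem IsPrimitiveRoot.linearIndependent_pow_val_units {p : ℕ} [hp : Fact p.Prime]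
    {K : Type*} [Field K] [CharZero K] {ζ : K} (hζ : IsPrimitiveRoot ζ p) :
    LinearIndependent ℚ fun x : (ZMod p)ˣ => ζ ^ (x : ZMod p).val := by
  have hdeg : (minpoly ℚ ζ).natDegree = p - 1 := by
    rw [← Polynomial.cyclotomic_eq_minpoly_rat hζ hp.out.pos, Polynomial.natDegree_cyclotomic,
      Nat.totient_prime hp.out]
  have hval_pos (x : (ZMod p)ˣ) : 0 < (x : ZMod p).val := ZMod.val_pos.2 x.ne_zero
  -- `ζ, ζ², …, ζ^(p-1)` is the power basis `1, ζ, …, ζ^(p-2)` multiplied by `ζ`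
  let index (x : (ZMod p)ˣ) : Fin (minpoly ℚ ζ).natDegree :=
    ⟨(x : ZMod p).val - 1, by have := ZMod.val_lt (x : ZMod p); have := hval_pos x; omega⟩
  have index_injective : Function.Injective index := fun x y hxy => by
    have := hval_pos x; have := hval_pos y
    exact Units.ext (ZMod.val_injective _ (by simp only [index, Fin.mk.injEq] at hxy; omega))
  have hmul := (linearIndependent_pow ζ).map' (LinearMap.mulLeft ℚ ζ)
    (LinearMap.ker_eq_bot.2 (mul_right_injective₀ (hζ.ne_zero hp.out.ne_zero)))
  have hfamily : (fun x : (ZMod p)ˣ => ζ ^ (x : ZMod p).val) =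
      ((LinearMap.mulLeft ℚ ζ) ∘ fun i : Fin _ => ζ ^ (i : ℕ)) ∘ index := by
    funext x
    simp [index, ← pow_succ', Nat.sub_add_cancel (hval_pos x)]
  rw [hfamily]
  exact hmul.comp index index_injective

section GaussPeriod

variable {l : ℕ+} {ζ : CyclotomicField l ℚ} {H : Subgroup (ZMod (l : ℕ))ˣ} [Fintype H]

theorem gaussPeriod_eq_sum_image (c : (ZMod (l : ℕ))ˣ) :
    gaussPeriod l ζ H c =
      ∑ x ∈ Finset.univ.image fun h : H => c * h, ζ ^ (x : ZMod (l : ℕ)).val := by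
  rw [Finset.sum_image fun _ _ _ _ hxy => Subtype.ext (mul_left_cancel hxy)]
  rfl

theorem gaussPeriod_mul_of_mem {u : (ZMod (l : ℕ))ˣ} (hu : u ∈ H) (c : (ZMod (l : ℕ))ˣ) :
    gaussPeriod l ζ H (u * c) = gaussPeriod l ζ H c :=
  Fintype.sum_equiv (Equiv.mulLeft ⟨u, hu⟩) _ _ fun h => by
    simp only [Equiv.coe_mulLeft, Subgroup.coe_mul, mul_assoc, mul_left_comm u c]

theorem gaussPeriod_eq_gaussPeriod_one_iff (hl : (l : ℕ).Prime) (hζ : IsPrimitiveRoot ζ l)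
    (u : (ZMod (l : ℕ))ˣ) : gaussPeriod l ζ H u = gaussPeriod l ζ H 1 ↔ u ∈ H := by
  refine ⟨fun h => ?_, fun hu => by simpa using gaussPeriod_mul_of_mem (ζ := ζ) hu 1⟩
  have := Fact.mk hl
  rw [gaussPeriod_eq_sum_image, gaussPeriod_eq_sum_image] at h
  have hu : u ∈ Finset.univ.image fun h : H => 1 * (h : (ZMod (l : ℕ))ˣ) := by
    rw [← hζ.linearIndependent_pow_val_units.injective_finsetSum h]
    exact Finset.mem_image.2 ⟨1, Finset.mem_univ _, mul_one u⟩
  obtain ⟨h, -, rfl⟩ := Finset.mem_image.1 hu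
  simp

theorem algEquiv_apply_gaussPeriod (hζ : IsPrimitiveRoot ζ l)
    (σ : CyclotomicField l ℚ ≃ₐ[ℚ] CyclotomicField l ℚ) (c : (ZMod (l : ℕ))ˣ) :
    σ (gaussPeriod l ζ H c) = gaussPeriod l ζ H (hζ.autToPow ℚ σ * c) := by
  rw [gaussPeriod, gaussPeriod, map_sum]
  refine Finset.sum_congr rfl fun h _ => ?_
  rw [map_pow, ← hζ.autToPow_spec ℚ σ, ← pow_mul, mul_assoc,
    Units.val_mul _ (c * (h : (ZMod (l : ℕ))ˣ)), ZMod.val_mul, ← pow_mod_orderOf ζ, ← hζ.eq_orderOf]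

end GaussPeriod

theorem gaussPeriod_mem_adjoin_general (l : ℕ+) (hl : (l : ℕ).Prime)
    (ζ : CyclotomicField l ℚ) (hζ : IsPrimitiveRoot ζ l)
    (H : Subgroup (ZMod (l : ℕ))ˣ) [Fintype H]
    (c : (ZMod (l : ℕ))ˣ) :
    gaussPeriod l ζ H c ∈ IntermediateField.adjoin ℚ {gaussPeriod l ζ H 1} := by
  have : IsCyclotomicExtension {(l : ℕ)} ℚ (CyclotomicField l ℚ) :=
    CyclotomicField.isCyclotomicExtension _ _
  have := IsCyclotomicExtension.isGalois {(l : ℕ)} ℚ (CyclotomicField l ℚ)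
  rw [← IsGalois.fixedField_fixingSubgroup (IntermediateField.adjoin ℚ {gaussPeriod l ζ H 1})]
  rintro ⟨σ, hσ⟩
  have hfix : σ (gaussPeriod l ζ H 1) = gaussPeriod l ζ H 1 :=
    (IntermediateField.mem_fixingSubgroup_iff _ _).1 hσ _
      (IntermediateField.mem_adjoin_simple_self ℚ _)
  have hσH : hζ.autToPow ℚ σ ∈ H := by
    rw [← gaussPeriod_eq_gaussPeriod_one_iff hl hζ, ← mul_one (hζ.autToPow ℚ σ),
      ← algEquiv_apply_gaussPeriod, hfix]
  exact (algEquiv_apply_gaussPeriod hζ σ c).trans (gaussPeriod_mul_of_mem hσH c)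

/-- Every Gauss period lies in the subfield `ℚ(η)` generated by the period `η = η₁`
of the identity coset. -/
theorem gaussPeriod_mem_adjoin (l : ℕ+) (hl : (l : ℕ).Prime)
    (ζ : CyclotomicField l ℚ) (hζ : IsPrimitiveRoot ζ l)
    (H : Subgroup (ZMod (l : ℕ))ˣ) [Fintype H] (f : ℕ) (hf : Fintype.card H = f)
    (c : (ZMod (l : ℕ))ˣ) :
    gaussPeriod l ζ H c ∈ IntermediateField.adjoin ℚ {gaussPeriod l ζ H 1} :=
  gaussPeriod_mem_adjoin_general l hl ζ hζ H c
end

section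
/- Let λ and q be distinct primes, let H be the cyclic subgroup of (ℤ/λℤ)ˣ generated by the class of q, of order f, and let η = Σ_{h ∈ H} ζ^h be the corresponding Gauss period (an algebraic integer whose minimal polynomial over ℤ is monic of degree e = (λ−1)/f). Then the reduction modulo q of the minimal polynomial of η over ℤ splits into linear factors over the field ℤ/qℤ. -/
/-! Every `Gal(K/ℚ)`-conjugate of `η` is again a sum `∑_{h ∈ H} z ^ h` over an `l`-th root of
unity `z`, so `∏_σ (X - σ η)` has integer coefficients and is a multiple of the minimal polynomial
of `η`. Modulo a prime `Q` of `𝓞 K` above `q`, Frobenius sends such a sum to `∑_{h ∈ H} z ^ (q h)`,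
which is the same sum because `q ∈ H`. Hence all roots of `∏_σ (X - σ η)` modulo `Q` lie in
`𝔽_q`, and this polynomial, together with its divisor, splits over `𝔽_q`. -/

open scoped BigOperators

open Polynomial

open NumberField

theorem exists_isMaximal_charP_quotient (S : Type*) [CommRing S] [Algebra.IsIntegral ℤ S]
    [FaithfulSMul ℤ S] (q : ℕ) [Fact q.Prime] : ∃ Q : Ideal S, Q.IsMaximal ∧ CharP (S ⧸ Q) q := by
  obtain ⟨Q, hQ, _⟩ := Ideal.exists_maximal_ideal_liesOver_of_isIntegral (S := S)
    (Ideal.span {(q : ℤ)})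
  refine ⟨Q, hQ, (CharP.charP_iff_prime_eq_zero Fact.out).mpr ?_⟩
  rw [← map_natCast (Ideal.Quotient.mk Q), Ideal.Quotient.eq_zero_iff_mem]
  simpa using (Ideal.mem_of_liesOver Q _ (q : ℤ)).mp (Ideal.mem_span_singleton_self _)

section FrobeniusFixed

variable {q : ℕ} [Fact q.Prime]

theorem splits_of_map_castHom_eq_prod_of_pow_eq_self {F : Type*} [Field F] [CharP F q]
    {ι : Type*} [Fintype ι] {p : (ZMod q)[X]} {x : ι → F}
    (hp : p.map (ZMod.castHom dvd_rfl F) = ∏ i, (X - C (x i))) (hx : ∀ i, x i ^ q = x i) :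
    p.Splits := by
  have hmem (i : ι) : x i ∈ (ZMod.castHom dvd_rfl F).fieldRange := by
    rw [ZMod.fieldRange_castHom_eq_bot]
    exact (Subfield.mem_bot_iff_pow_eq_self F q).mpr (hx i)
  choose b hb using hmem
  have hp' : p = ∏ i, (X - C (b i)) := by
    apply map_injective _ (ZMod.castHom dvd_rfl F).injective
    simp [hp, Polynomial.map_prod, hb]
  rw [hp']
  exact Splits.prod fun i _ ↦ Splits.X_sub_C _

theorem splits_map_zmod_of_map_eq_prod {S : Type*} [CommRing S] (Q : Ideal S) [Q.IsMaximal]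
    [CharP (S ⧸ Q) q] {ι : Type*} [Fintype ι] {P : ℤ[X]} {x : ι → S}
    (hP : P.map (algebraMap ℤ S) = ∏ i, (X - C (x i)))
    (hx : ∀ i, Ideal.Quotient.mk Q (x i) ^ q = Ideal.Quotient.mk Q (x i)) :
    (P.map (Int.castRingHom (ZMod q))).Splits := by
  let := Ideal.Quotient.field Q
  refine splits_of_map_castHom_eq_prod_of_pow_eq_self
    (x := fun i ↦ Ideal.Quotient.mk Q (x i)) ?_ hx
  rw [map_map, RingHom.ext_int ((ZMod.castHom dvd_rfl (S ⧸ Q)).comp (Int.castRingHom (ZMod q)))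
    ((Ideal.Quotient.mk Q).comp (algebraMap ℤ S)), ← map_map, hP, Polynomial.map_prod]
  simp

theorem splits_map_zmod_minpoly_of_pow_smul_eq {S : Type*} [CommRing S] [IsDomain S]
    [Module.IsTorsionFree ℤ S] (G : Type*) [Group G] [Finite G] [MulSemiringAction G S]
    [Algebra.IsInvariant ℤ S G] (Q : Ideal S) [Q.IsMaximal] [CharP (S ⧸ Q) q] (b : S)
    (hb : ∀ g : G, Ideal.Quotient.mk Q (g • b) ^ q = Ideal.Quotient.mk Q (g • b)) :
    ((minpoly ℤ b).map (Int.castRingHom (ZMod q))).Splits := by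
  have := Fintype.ofFinite G
  obtain ⟨P, hP, -, hPmonic⟩ := lifts_and_natDegree_eq_and_monic
    (Algebra.IsInvariant.charpoly_mem_lifts ℤ S G b) (MulSemiringAction.monic_charpoly G b)
  have hPb : aeval b P = 0 := by
    rw [← eval_map_algebraMap, hP, MulSemiringAction.eval_charpoly]
  have hdvd : minpoly ℤ b ∣ P :=
    minpoly.isIntegrallyClosed_dvd ((Algebra.IsInvariant.isIntegral ℤ S G).isIntegral b) hPb
  have hP0 : P.map (Int.castRingHom (ZMod q)) ≠ 0 := (hPmonic.map _).ne_zero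
  rw [MulSemiringAction.charpoly_eq] at hP
  exact (splits_map_zmod_of_map_eq_prod Q hP hb).of_dvd hP0
    (map_dvd (Int.castRingHom (ZMod q)) hdvd)

end FrobeniusFixed

section PeriodSum

variable {R : Type*} [CommRing R] {n : ℕ}

def periodSum (z : R) (H : Subgroup (ZMod n)ˣ) [Fintype H] : R :=
  ∑ h : H, z ^ ((h : (ZMod n)ˣ) : ZMod n).val

theorem map_periodSum {S : Type*} [CommRing S] (φ : R →+* S) (z : R) (H : Subgroup (ZMod n)ˣ)
    [Fintype H] : φ (periodSum z H) = periodSum (φ z) H := by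
  simp [periodSum]

theorem periodSum_pow_char [NeZero n] {q : ℕ} [Fact q.Prime] [CharP R q] {z : R}
    (hz : z ^ n = 1) {H : Subgroup (ZMod n)ˣ} [Fintype H] {u : (ZMod n)ˣ}
    (hu : (u : ZMod n) = q) (huH : u ∈ H) : periodSum z H ^ q = periodSum z H := by
  have : ExpChar R q := ExpChar.prime Fact.out
  rw [periodSum, sum_pow_char]
  refine Fintype.sum_equiv (Equiv.mulRight ⟨u, huH⟩) _ _ fun h ↦ ?_
  rw [← pow_mul]
  refine pow_eq_pow_of_modEq ?_ hz
  rw [← ZMod.natCast_eq_natCast_iff]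
  simp [hu]

end PeriodSum

theorem minpoly_periodSum_splits_mod {K : Type*} [Field K] [NumberField K] [IsGalois ℚ K]
    {n : ℕ} [NeZero n] {ζ : 𝓞 K} (hζ : ζ ^ n = 1) (H : Subgroup (ZMod n)ˣ) [Fintype H]
    {q : ℕ} [Fact q.Prime] {u : (ZMod n)ˣ} (hu : (u : ZMod n) = q) (huH : u ∈ H) :
    ((minpoly ℤ (periodSum ζ H)).map (Int.castRingHom (ZMod q))).Splits := by
  have := Algebra.isInvariant_of_isGalois' ℤ ℚ K (𝓞 K)
  have : Finite (𝓞 K ≃ₐ[ℤ] 𝓞 K) := Finite.of_equiv _ (galRestrict ℤ ℚ K (𝓞 K)).toEquiv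
  obtain ⟨Q, _, _⟩ := exists_isMaximal_charP_quotient (𝓞 K) q
  refine splits_map_zmod_minpoly_of_pow_smul_eq (𝓞 K ≃ₐ[ℤ] 𝓞 K) Q _ fun g ↦ ?_
  let φ : 𝓞 K →+* 𝓞 K ⧸ Q := (Ideal.Quotient.mk Q).comp g.toRingHom
  change φ (periodSum ζ H) ^ q = φ (periodSum ζ H)
  rw [map_periodSum]
  exact periodSum_pow_char (by rw [← map_pow, hζ, map_one]) hu huH

theorem minpoly_gaussPeriod_splits_mod_general (l : ℕ+)
    (q : ℕ) [hq : Fact q.Prime]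
    (ζ : CyclotomicField l ℚ) (hζ : IsPrimitiveRoot ζ l)
    (u : (ZMod (l : ℕ))ˣ) (hu : (u : ZMod (l : ℕ)) = (q : ZMod (l : ℕ)))
    (H : Subgroup (ZMod (l : ℕ))ˣ) [Fintype H] (hH : H = Subgroup.zpowers u) :
    Polynomial.Splits
      ((minpoly ℤ (gaussPeriod l ζ H 1)).map (Int.castRingHom (ZMod q))) := by
  -- Instance search finds `DivisionRing.toRatAlgebra`, not the algebra structure for which
  -- `CyclotomicField.isCyclotomicExtension` is stated; the two agree only up to unfolding.
  have : IsGalois ℚ (CyclotomicField l ℚ) := @IsCyclotomicExtension.isGalois {(l : ℕ)} ℚ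
    (CyclotomicField l ℚ) _ _ _ (CyclotomicField.isCyclotomicExtension (l : ℕ) ℚ)
  have hη : gaussPeriod l ζ H 1 = algebraMap _ _ (periodSum hζ.toInteger H) := by
    simp only [gaussPeriod, one_mul, map_periodSum]
    rfl
  rw [hη, minpoly.algebraMap_eq (FaithfulSMul.algebraMap_injective _ _)]
  exact minpoly_periodSum_splits_mod hζ.toInteger_isPrimitiveRoot.pow_eq_one H hu
    (hH ▸ Subgroup.mem_zpowers u)

/-- For distinct primes `λ` and `q`, with `H` the subgroup generated by the class of `q`
modulo `λ`, the reduction modulo `q` of the minimal polynomial over `ℤ` of the Gauss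
period `η = ∑_{h ∈ H} ζ^h` splits into linear factors over `ℤ/qℤ`. -/
theorem minpoly_gaussPeriod_splits_mod (l : ℕ+) (hl : (l : ℕ).Prime)
    (q : ℕ) [hq : Fact q.Prime] (hql : q ≠ (l : ℕ))
    (ζ : CyclotomicField l ℚ) (hζ : IsPrimitiveRoot ζ l)
    (u : (ZMod (l : ℕ))ˣ) (hu : (u : ZMod (l : ℕ)) = (q : ZMod (l : ℕ)))
    (H : Subgroup (ZMod (l : ℕ))ˣ) [Fintype H] (hH : H = Subgroup.zpowers u)
    (f e : ℕ) (hf : orderOf u = f) (he : e = ((l : ℕ) - 1) / f) :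
    Polynomial.Splits
      ((minpoly ℤ (gaussPeriod l ζ H 1)).map (Int.castRingHom (ZMod q))) :=
  minpoly_gaussPeriod_splits_mod_general l q (hq := hq) ζ hζ u hu H hH
end
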